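/- arXiv:math/0305406 — 2 statements merged into one kernel-verified Lean document; each statement's English description precedes it below -/
import Mathlib

section
/- Let F ⊆ Q̄ be closed under the given involution, p(t) an irreducible polynomial over F with p̄(t) = u·p(t) for a unit u in F[t, t⁻¹], and let α ∈ S¹ be a root of ρ(p) for an embedding ρ : F → Q̄ preserving the involution. Let (V, θ) be a nonsingular hermitian form over F_p = F[t,t⁻¹]/(p(t)). Then the signature of the hermitian form on V ⊗_{F_p} Q̄ obtained by extending scalars via the embedding ρ_α : F_p → Q̄, t ↦ α, equals the signature of the restriction to Ker(t − α) ⊆ V ⊗_F Q̄ of the form tr_{Q̄_p/Q̄} ∘ (θ ⊗_F Q̄). In other words, the two ways of localizing a hermitian form over F_p at the place (ρ, α) yield isometric hermitian forms over Q̄. -/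
set_option synthInstance.maxHeartbeats 1000000

open Complex

namespace Stmt4

/-- The index (dimension of a maximal subspace contained in `W` on which the
form `τ` is positive definite). -/
noncomputable def posIdxOn (V : Type*) [AddCommGroup V] [Module ℂ V]
    (W : Set V) (τ : V → V → ℂ) : ℕ :=
  sSup {d : ℕ | ∃ U : Submodule ℂ V, (U : Set V) ⊆ W ∧
    Module.finrank ℂ U = d ∧ ∀ v ∈ U, v ≠ 0 → 0 < (τ v v).re}

/-- The index of a maximal negative definite subspace contained in `W`. -/
noncomputable def negIdxOn (V : Type*) [AddCommGroup V] [Module ℂ V]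
    (W : Set V) (τ : V → V → ℂ) : ℕ :=
  sSup {d : ℕ | ∃ U : Submodule ℂ V, (U : Set V) ⊆ W ∧
    Module.finrank ℂ U = d ∧ ∀ v ∈ U, v ≠ 0 → (τ v v).re < 0}

/-- The signature of the form `τ` restricted to `W`. -/
noncomputable def signOn (V : Type*) [AddCommGroup V] [Module ℂ V]
    (W : Set V) (τ : V → V → ℂ) : ℤ :=
  (posIdxOn V W τ : ℤ) - (negIdxOn V W τ : ℤ)

end Stmt4

/-!
In `ℂ_p = ℂ[t]/(ρ(p))` every element `m` acts on the kernel of `t - α` by the scalar `m(α)`.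
Hence, for `x` in that kernel, multiplication by `x` is the rank-one map `y ↦ y(α) x`, whose trace
is `x(α)`. Since `p` is separable, `α` is a simple root of `ρ(p)`, so the kernel is a line spanned
by an element `e` with `e(α) = 1`. Because `t̄ = t⁻¹` and `ᾱ = α⁻¹`, evaluation at `α` turns the
involution into complex conjugation. Together these show that `v ↦ (v_k(α))_k` is an isometry from
`Ker(t - α)ⁿ` with the trace form onto `ℂⁿ` with the form `ρ_α(θ)`, with inverse `c ↦ (c_k e)_k`.
-/

namespace Stmt4

section Isometry
variable {V₁ V₂ : Type*} [AddCommGroup V₁] [Module ℂ V₁] [AddCommGroup V₂] [Module ℂ V₂]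
  {W₁ : Set V₁} {W₂ : Set V₂} {τ₁ : V₁ → V₁ → ℂ} {τ₂ : V₂ → V₂ → ℂ}

def definiteDims (V : Type*) [AddCommGroup V] [Module ℂ V] (W : Set V) (τ : V → V → ℂ)
    (P : ℝ → Prop) : Set ℕ :=
  {d | ∃ U : Submodule ℂ V, (U : Set V) ⊆ W ∧ Module.finrank ℂ U = d ∧
    ∀ v ∈ U, v ≠ 0 → P (τ v v).re}

theorem definiteDims_subset (g : V₁ →ₗ[ℂ] V₂) (hmaps : Set.MapsTo g W₁ W₂)
    (hinj : Set.InjOn g W₁) (hτ : ∀ v ∈ W₁, τ₂ (g v) (g v) = τ₁ v v) (P : ℝ → Prop) :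
    definiteDims V₁ W₁ τ₁ P ⊆ definiteDims V₂ W₂ τ₂ P := by
  rintro d ⟨U, hUW, rfl, hUP⟩
  refine ⟨U.map g, ?_, ?_, ?_⟩
  · rintro _ ⟨u, hu, rfl⟩
    exact hmaps (hUW hu)
  · have hinjU : Function.Injective (g.comp U.subtype) :=
      fun u u' huu' => Subtype.ext (hinj (hUW u.2) (hUW u'.2) huu')
    rw [show U.map g = LinearMap.range (g ∘ₗ U.subtype) by
      rw [LinearMap.range_comp, Submodule.range_subtype], LinearMap.finrank_range_of_inj hinjU]
  · rintro _ ⟨u, hu, rfl⟩ hu0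
    rw [hτ u (hUW hu)]
    exact hUP u hu (by rintro rfl; exact hu0 (map_zero g))

theorem signOn_eq_of_isometry (g : V₁ →ₗ[ℂ] V₂) (g' : V₂ →ₗ[ℂ] V₁)
    (hg : Set.MapsTo g W₁ W₂) (hg' : Set.MapsTo g' W₂ W₁)
    (hinv : Set.LeftInvOn g' g W₁) (hinv' : Set.LeftInvOn g g' W₂)
    (hτ : ∀ v ∈ W₁, τ₂ (g v) (g v) = τ₁ v v) :
    signOn V₁ W₁ τ₁ = signOn V₂ W₂ τ₂ := by
  have hτ' : ∀ w ∈ W₂, τ₁ (g' w) (g' w) = τ₂ w w := fun w hw => by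
    rw [← hτ _ (hg' hw), hinv' hw]
  have hdims : ∀ P, definiteDims V₁ W₁ τ₁ P = definiteDims V₂ W₂ τ₂ P := fun P =>
    (definiteDims_subset g hg hinv.injOn hτ P).antisymm
      (definiteDims_subset g' hg' hinv'.injOn hτ' P)
  have hpos : posIdxOn V₁ W₁ τ₁ = posIdxOn V₂ W₂ τ₂ := congrArg sSup (hdims (0 < ·))
  have hneg : negIdxOn V₁ W₁ τ₁ = negIdxOn V₂ W₂ τ₂ := congrArg sSup (hdims (· < 0))
  rw [signOn, signOn, hpos, hneg]

end Isometry

end Stmt4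

open Polynomial Stmt4

namespace AdjoinRoot

section CommRing
variable {R : Type*} [CommRing R] {f : R[X]} {a : R}

noncomputable def evalRoot (h : f.IsRoot a) : AdjoinRoot f →ₐ[R] R :=
  liftAlgHom f (Algebra.ofId R R) a h

theorem evalRoot_of (h : f.IsRoot a) (r : R) : evalRoot h (of f r) = r :=
  liftAlgHom_of _ _ _ _ _

theorem evalRoot_root (h : f.IsRoot a) : evalRoot h (root f) = a :=
  liftAlgHom_root _ _ _ _

theorem evalRoot_mk (h : f.IsRoot a) (g : R[X]) : evalRoot h (mk f g) = g.eval a :=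
  liftAlgHom_mk _ _ _ _ _

theorem mul_eq_evalRoot_smul (h : f.IsRoot a) (m : AdjoinRoot f) {x : AdjoinRoot f}
    (hx : (root f - of f a) * x = 0) : m * x = evalRoot h m • x := by
  induction m using AdjoinRoot.induction_on with
  | ih g =>
    obtain ⟨q, hq⟩ := X_sub_C_dvd_sub_C_eval (p := g) (a := a)
    have hmk : mk f g - of f (g.eval a) = (root f - of f a) * mk f q := by
      simpa only [map_sub, map_mul, mk_C, mk_X] using congrArg (mk f) hq
    rw [evalRoot_mk, Algebra.smul_def, algebraMap_eq, ← sub_eq_zero, ← sub_mul, hmk,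
      mul_right_comm, hx, zero_mul]

theorem eq_evalRoot_smul (h : f.IsRoot a) {x e : AdjoinRoot f}
    (hx : (root f - of f a) * x = 0) (he : (root f - of f a) * e = 0)
    (he1 : evalRoot h e = 1) : x = evalRoot h x • e := by
  rw [← mul_eq_evalRoot_smul h x he, mul_comm, mul_eq_evalRoot_smul h e hx, he1, one_smul]

end CommRing

section Field
variable {K : Type*} [Field K] {f : K[X]} {a : K}

theorem trace_eq_evalRoot (hf : f ≠ 0) (h : f.IsRoot a) {x : AdjoinRoot f}
    (hx : (root f - of f a) * x = 0) : Algebra.trace K (AdjoinRoot f) x = evalRoot h x := by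
  have : Module.Finite K (AdjoinRoot f) := (powerBasis hf).finite
  have hmul : Algebra.lmul K (AdjoinRoot f) x = (evalRoot h).toLinearMap.smulRight x := by
    ext y
    simp [mul_comm x y, mul_eq_evalRoot_smul h y hx]
  rw [Algebra.trace_apply, hmul, LinearMap.trace_smulRight, AlgHom.toLinearMap_apply]

/-- At a simple root the kernel of `t - a` contains an element evaluating to `1`: a multiple
of the class of `f / (t - a)`, whose value at `a` is `f'(a)`. -/
theorem exists_evalRoot_eq_one (h : f.IsRoot a) (hsimple : f.derivative.eval a ≠ 0) :
    ∃ e : AdjoinRoot f, (root f - of f a) * e = 0 ∧ evalRoot h e = 1 := by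
  set g := f /ₘ (X - C a)
  have hg : (root f - of f a) * mk f g = 0 := by
    rw [← mk_X, ← mk_C, ← map_sub, ← map_mul, mul_divByMonic_eq_iff_isRoot.mpr h, mk_self]
  have hga : g.eval a = f.derivative.eval a := by
    simpa using congrArg (eval a)
      (divByMonic_add_X_sub_C_mul_derivative_divByMonic_eq_derivative f a)
  refine ⟨(f.derivative.eval a)⁻¹ • mk f g, by rw [mul_smul_comm, hg, smul_zero], ?_⟩
  rw [map_smul, evalRoot_mk, hga, smul_eq_mul, inv_mul_cancel₀ hsimple]

end Field

section Conj
variable {f : ℂ[X]} {a : ℂ} {bar : AdjoinRoot f →+* AdjoinRoot f}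

theorem evalRoot_bar (h : f.IsRoot a) (ha : ‖a‖ = 1)
    (hbarC : ∀ z : ℂ, bar (of f z) = of f (starRingEnd ℂ z))
    (hbar_root : bar (root f) * root f = 1) (x : AdjoinRoot f) :
    evalRoot h (bar x) = starRingEnd ℂ (evalRoot h x) := by
  have hconj : starRingEnd ℂ a = a⁻¹ := by
    rw [Complex.inv_def, ← Complex.sq_norm, ha]; simp
  have hroot : evalRoot h (bar (root f)) = a⁻¹ := by
    have := congrArg (evalRoot h) hbar_root
    rw [map_mul, evalRoot_root, map_one] at this
    exact eq_inv_of_mul_eq_one_left this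
  suffices ((evalRoot h : AdjoinRoot f →+* ℂ).comp bar)
      = (starRingEnd ℂ).comp (evalRoot h : AdjoinRoot f →+* ℂ) from RingHom.congr_fun this x
  refine ringHom_ext (RingHom.ext fun z => ?_) ?_
  · simp [hbarC, evalRoot_of]
  · simp [hroot, evalRoot_root, hconj]

theorem trace_bar_mul_mul (hf : f ≠ 0) (h : f.IsRoot a) (ha : ‖a‖ = 1)
    (hbarC : ∀ z : ℂ, bar (of f z) = of f (starRingEnd ℂ z))
    (hbar_root : bar (root f) * root f = 1) (x : AdjoinRoot f) {y : AdjoinRoot f}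
    (hy : (root f - of f a) * y = 0) (m : AdjoinRoot f) :
    Algebra.trace ℂ (AdjoinRoot f) (bar x * m * y)
      = starRingEnd ℂ (evalRoot h x) * evalRoot h m * evalRoot h y := by
  have hxy : (root f - of f a) * (bar x * y) = 0 := by
    rw [mul_left_comm, hy, mul_zero]
  rw [mul_right_comm, mul_comm _ m, mul_eq_evalRoot_smul h m hxy, map_smul,
    trace_eq_evalRoot hf h hxy, map_mul, evalRoot_bar h ha hbarC hbar_root, smul_eq_mul]
  ring

end Conj

theorem signOn_evalRoot_eq_signOn_trace {ι : Type*} [Fintype ι] {f : ℂ[X]} {a : ℂ}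
    {bar : AdjoinRoot f →+* AdjoinRoot f} (hf : f ≠ 0) (h : f.IsRoot a)
    (hsimple : f.derivative.eval a ≠ 0) (ha : ‖a‖ = 1)
    (hbarC : ∀ z : ℂ, bar (of f z) = of f (starRingEnd ℂ z))
    (hbar_root : bar (root f) * root f = 1) (M : Matrix ι ι (AdjoinRoot f)) :
    signOn (ι → ℂ) Set.univ
        (fun v w => ∑ i, ∑ j, starRingEnd ℂ (v i) * evalRoot h (M i j) * w j)
      = signOn (ι → AdjoinRoot f) {v | ∀ k, (root f - of f a) * v k = 0}
        (fun v w => ∑ k, ∑ l, Algebra.trace ℂ (AdjoinRoot f) (bar (v k) * M k l * w l)) := by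
  obtain ⟨e, he, he1⟩ := exists_evalRoot_eq_one h hsimple
  refine (signOn_eq_of_isometry ((evalRoot h).toLinearMap.compLeft ι)
    ((LinearMap.toSpanSingleton ℂ _ e).compLeft ι) (Set.mapsTo_univ _ _) ?_ ?_ ?_ ?_).symm
  · intro c _ k
    simp [he]
  · intro v hv
    funext k
    exact (eq_evalRoot_smul h (hv k) he he1).symm
  · intro c _
    funext k
    simp [he1]
  · intro v hv
    simp [trace_bar_mul_mul hf h ha hbarC hbar_root _ (hv _)]

end AdjoinRoot

open Stmt4 in
theorem statement4_general (F : Subfield ℂ)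
    (p : Polynomial F) [Fact (Irreducible p)]
    -- the involution of F_p = F[t]/(p)
    (ι : AdjoinRoot p →+* AdjoinRoot p)
    (hιt : ι (AdjoinRoot.root p) * AdjoinRoot.root p = 1)
    -- the embedding ρ : F → Q̄ ⊆ ℂ, preserving the involution
    (ρ : F →+* ℂ)
    -- α ∈ S¹ a root of ρ(p)
    (α : ℂ) (hαcirc : ‖α‖ = 1) (hα : Polynomial.eval₂ ρ α p = 0)
    -- the hermitian form (V, θ) over F_p, V = (F_p)ⁿ
    (n : ℕ) (θ : Matrix (Fin n) (Fin n) (AdjoinRoot p))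
    -- the base change map φ : F_p → Q̄_p = Q̄[t]/(ρ(p)) induced by ρ
    (φ : AdjoinRoot p →+* AdjoinRoot (p.map ρ))
    (hφC : ∀ a : F, φ (AdjoinRoot.of p a) = AdjoinRoot.of (p.map ρ) (ρ a))
    (hφt : φ (AdjoinRoot.root p) = AdjoinRoot.root (p.map ρ))
    -- the involution of Q̄_p induced by ι and complex conjugation
    (bar : AdjoinRoot (p.map ρ) →+* AdjoinRoot (p.map ρ))
    (hbarC : ∀ z : ℂ, bar (AdjoinRoot.of (p.map ρ) z)
      = AdjoinRoot.of (p.map ρ) ((starRingEnd ℂ) z))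
    (hbart : bar (AdjoinRoot.root (p.map ρ)) = φ (ι (AdjoinRoot.root p))) :
    -- the signature of θ pushed forward along ρ_α : F_p → ℂ, t ↦ α ...
    signOn (Fin n → ℂ) Set.univ
      (fun v w => ∑ i, ∑ j,
        (starRingEnd ℂ) (v i) * (AdjoinRoot.lift ρ α hα) (θ i j) * w j)
    -- ... equals the signature of the trace form restricted to Ker(t - α)
    = signOn (Fin n → AdjoinRoot (p.map ρ))
        {v | ∀ k, (AdjoinRoot.root (p.map ρ) - AdjoinRoot.of (p.map ρ) α) * v k = 0}
        (fun v w => ∑ k, ∑ l,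
          Algebra.trace ℂ (AdjoinRoot (p.map ρ)) (bar (v k) * φ (θ k l) * w l)) := by
  have hf : p.map ρ ≠ 0 := Polynomial.map_ne_zero (Fact.out : Irreducible p).ne_zero
  have hroot : (p.map ρ).IsRoot α := by rwa [Polynomial.IsRoot, Polynomial.eval_map]
  have hsimple : (p.map ρ).derivative.eval α ≠ 0 :=
    (Fact.out : Irreducible p).separable.map.aeval_derivative_ne_zero hroot
  have hbar_root : bar (AdjoinRoot.root (p.map ρ)) * AdjoinRoot.root (p.map ρ) = 1 := by
    rw [hbart, ← hφt, ← map_mul, hιt, map_one]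
  have hlift : ∀ x, AdjoinRoot.lift ρ α hα x = AdjoinRoot.evalRoot hroot (φ x) := by
    refine RingHom.congr_fun (f := AdjoinRoot.lift ρ α hα)
      (g := (AdjoinRoot.evalRoot hroot : _ →+* ℂ).comp φ)
      (AdjoinRoot.ringHom_ext (RingHom.ext fun a => ?_) ?_)
    · simp [hφC, AdjoinRoot.evalRoot_of]
    · simp [hφt, AdjoinRoot.evalRoot_root]
  simp only [hlift]
  exact AdjoinRoot.signOn_evalRoot_eq_signOn_trace hf hroot hsimple hαcirc hbarC hbar_root
    (θ.map φ)

open Stmt4 in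
/-- Let `F ⊆ ℂ` be Galois over `ℚ` and closed under complex conjugation, `p`
an irreducible (monic) polynomial over `F` carrying an involution `ι` of
`F_p = F[t,t⁻¹]/(p(t))` with `ā` on coefficients and `t̄ = t⁻¹` (which encodes
`p̄ = u·p`), let `ρ : F → Q̄ ⊆ ℂ` be an involution-preserving embedding and
`α ∈ S¹` a root of `ρ(p)`.  Let `(V, θ)` be a nonsingular hermitian form over
`F_p`, given by a hermitian matrix `θ` with `det θ ≠ 0`.  Then the signature of
the hermitian form on `V ⊗_{F_p} Q̄` obtained by extending scalars along
`ρ_α : F_p → Q̄`, `t ↦ α`, equals the signature of the restriction to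
`Ker(t - α) ⊆ V ⊗_F Q̄` of the trace form `tr_{Q̄_p/Q̄} ∘ (θ ⊗_F Q̄)`
(where `Q̄_p = Q̄[t]/(ρ(p))`, with `φ : F_p → Q̄_p` the base-change map and
`bar` the induced involution of `Q̄_p`): the two localizations of a hermitian
form over `F_p` at the place `(ρ, α)` have the same signature. -/
theorem statement4 (F : Subfield ℂ) [IsGalois ℚ F]
    (hF : ∀ x : ℂ, x ∈ F → (starRingEnd ℂ) x ∈ F)
    (p : Polynomial F) [Fact (Irreducible p)] (hmonic : p.Monic)
    -- the involution of F_p = F[t]/(p)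
    (ι : AdjoinRoot p →+* AdjoinRoot p) (hι2 : ∀ x, ι (ι x) = x)
    (hιC : ∀ a : F, ι (AdjoinRoot.of p a)
      = AdjoinRoot.of p ⟨(starRingEnd ℂ) (a : ℂ), hF _ a.2⟩)
    (hιt : ι (AdjoinRoot.root p) * AdjoinRoot.root p = 1)
    -- the embedding ρ : F → Q̄ ⊆ ℂ, preserving the involution
    (ρ : F →+* ℂ)
    (hρ : ∀ x : F, ρ ⟨(starRingEnd ℂ) (x : ℂ), hF _ x.2⟩ = (starRingEnd ℂ) (ρ x))
    -- α ∈ S¹ a root of ρ(p)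
    (α : ℂ) (hαcirc : ‖α‖ = 1) (hα : Polynomial.eval₂ ρ α p = 0)
    -- the hermitian form (V, θ) over F_p, V = (F_p)ⁿ
    (n : ℕ) (θ : Matrix (Fin n) (Fin n) (AdjoinRoot p))
    (hherm : ∀ i j, θ i j = ι (θ j i)) (hns : θ.det ≠ 0)
    -- the base change map φ : F_p → Q̄_p = Q̄[t]/(ρ(p)) induced by ρ
    (φ : AdjoinRoot p →+* AdjoinRoot (p.map ρ))
    (hφC : ∀ a : F, φ (AdjoinRoot.of p a) = AdjoinRoot.of (p.map ρ) (ρ a))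
    (hφt : φ (AdjoinRoot.root p) = AdjoinRoot.root (p.map ρ))
    -- the involution of Q̄_p induced by ι and complex conjugation
    (bar : AdjoinRoot (p.map ρ) →+* AdjoinRoot (p.map ρ))
    (hbarC : ∀ z : ℂ, bar (AdjoinRoot.of (p.map ρ) z)
      = AdjoinRoot.of (p.map ρ) ((starRingEnd ℂ) z))
    (hbart : bar (AdjoinRoot.root (p.map ρ)) = φ (ι (AdjoinRoot.root p))) :
    -- the signature of θ pushed forward along ρ_α : F_p → ℂ, t ↦ α ...
    signOn (Fin n → ℂ) Set.univ
      (fun v w => ∑ i, ∑ j,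
        (starRingEnd ℂ) (v i) * (AdjoinRoot.lift ρ α hα) (θ i j) * w j)
    -- ... equals the signature of the trace form restricted to Ker(t - α)
    = signOn (Fin n → AdjoinRoot (p.map ρ))
        {v | ∀ k, (AdjoinRoot.root (p.map ρ) - AdjoinRoot.of (p.map ρ) α) * v k = 0}
        (fun v w => ∑ k, ∑ l,
          Algebra.trace ℂ (AdjoinRoot (p.map ρ)) (bar (v k) * φ (θ k l) * w l)) :=
  statement4_general F p ι hιt ρ α hαcirc hα n θ φ hφC hφt bar hbarC hbart
end

section
/- Let f be an isometry of a nonsingular (−ε)-symmetric form (V, θ) over a field F with involution such that 1 − f is invertible. Then the F(t)-valued sesquilinear form on V ⊗_F F(t) defined by (v, w) ↦ (1 − t⁻¹)·θ((1 − f)⁻¹v, w) + ε(1 − t)·conj(θ((1 − f)⁻¹w, v)) is a nonsingular ε-hermitian form over F(t), where F(t) carries the involution extending that of F with t̄ = t⁻¹. -/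
/-!
Hermitian symmetry is a direct computation from `t̄ = t⁻¹`, `ε̄ = ε` and `ε² = 1`.

For nonsingularity put `g = (1 - f)⁻¹`. Expanding `θ((1 - f)gv, (1 - f)gw)` with `f` an isometry
gives `θ(gv, w) + θ(v, gw) = θ(v, w)`, and `(-ε)`-symmetry rewrites the second summand of the
form, so that `Θ(v, w) = (1 - t⁻¹)·(θ(gv, w) + t·θ(v, gw))`. The Gram matrix of `Θ` is therefore
`1 - t⁻¹` times a matrix `A + tB` with `A, B` over `F`, and at `t = 1` this is the Gram matrix of
`θ`, which is invertible because `θ` is nonsingular; hence `det (A + tB)` is a nonzero polynomial.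
-/

theorem LinearMap.apply_sub_apply_sub_of_isometry {R M : Type*} [CommRing R] {σ : R →+* R}
    [AddCommGroup M] [Module R M] (B : M →ₛₗ[σ] M →ₗ[R] R) (f : M →ₗ[R] M)
    (hf : ∀ x y, B (f x) (f y) = B x y) (x y : M) :
    B (x - f x) (y - f y) = B x (y - f y) + B (x - f x) y := by
  simp only [map_sub, LinearMap.sub_apply, hf]
  ring

theorem LinearMap.SeparatingLeft.det_of_apply_basis_ne_zero {F V ι : Type*} [Field F]
    [AddCommGroup V] [Module F V] [Fintype ι] [DecidableEq ι] {J : F →+* F}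
    (hJ : Function.Involutive J) {B : V →ₛₗ[J] V →ₗ[F] F} (hB : B.SeparatingLeft)
    (b : Module.Basis ι F V) : (Matrix.of fun i j => B (b i) (b j)).det ≠ 0 := by
  intro hdet
  obtain ⟨c, hc, hcB⟩ := Matrix.exists_vecMul_eq_zero_iff.mpr hdet
  have hBv : B (∑ i, J (c i) • b i) = 0 := b.ext fun j => by
    simpa [Matrix.vecMul, dotProduct, hJ _] using congrFun hcB j
  have hv := hB _ fun w => by rw [hBv]; rfl
  apply hc
  funext i
  simpa using Fintype.linearIndependent_iff.mp b.linearIndependent _ hv i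

section RatFunc

open RatFunc

variable {F : Type*} [Field F]

theorem RatFunc.one_sub_inv_X_ne_zero : (1 - X⁻¹ : RatFunc F) ≠ 0 := by
  rw [sub_ne_zero, ne_comm, inv_ne_one]
  exact fun h => by simpa using congrArg intDegree h

theorem RatFunc.det_C_add_X_mul_C_ne_zero {n : Type*} [Fintype n] [DecidableEq n]
    {A B : Matrix n n F} (h : (A + B).det ≠ 0) :
    (Matrix.of fun i j => C (A i j) + X * C (B i j) : Matrix n n (RatFunc F)).det ≠ 0 := by
  set P := A.map Polynomial.C + (Polynomial.X : Polynomial F) • B.map Polynomial.C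
  have hP : P.det ≠ 0 := fun h0 => h <| by
    have heval : (Polynomial.evalRingHom (1 : F)).mapMatrix P = A + B := by ext; simp [P]
    rw [← heval, ← RingHom.map_det, h0, map_zero]
  have hmap : (algebraMap _ (RatFunc F)).mapMatrix P
      = Matrix.of fun i j => C (A i j) + X * C (B i j) := by
    ext
    simp [P, algebraMap_C, algebraMap_X]
    ring
  rw [← hmap, ← RingHom.map_det]
  exact (map_ne_zero_iff _ (algebraMap_injective F)).mpr hP

variable {J : F →+* F} {JR : RatFunc F →+* RatFunc F} {ε : F}

theorem RatFunc.eq_C_mul_conj_swap (hJ : Function.Involutive J)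
    (hJRC : ∀ a : F, JR (C a) = C (J a)) (hJRX : JR X = X⁻¹)
    (hJε : J ε = ε) (hε : ε * ε = 1) (a b : F) :
    (1 - X⁻¹) * C a + C ε * ((1 - X) * C (J b))
      = C ε * JR ((1 - X⁻¹) * C b + C ε * ((1 - X) * C (J a))) := by
  have hCε : C ε * C ε = 1 := by rw [← map_mul, hε, map_one]
  simp only [map_add, map_mul, map_sub, map_one, map_inv₀, hJRX, inv_inv, hJRC, hJ _, hJε]
  linear_combination ((X⁻¹ - 1) * C a) * hCε

theorem RatFunc.add_C_mul_eq_one_sub_inv_X_mul {a b c : F} (h : ε * J b = -c) :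
    (1 - X⁻¹) * C a + C ε * ((1 - X) * C (J b)) = (1 - X⁻¹) * (C a + X * C c) := by
  have hX : (X : RatFunc F) ≠ 0 := X_ne_zero
  rw [mul_left_comm, ← map_mul, h, map_neg]
  field_simp
  ring

end RatFunc

theorem statement12_general (F : Type*) [Field F]
    (J : F →+* F) (hJ : ∀ x, J (J x) = x)
    (ε : F) (hε : ε = 1 ∨ ε = -1)
    (JR : RatFunc F →+* RatFunc F)
    (hJRC : ∀ a : F, JR (RatFunc.C a) = RatFunc.C (J a))
    (hJRX : JR RatFunc.X = (RatFunc.X)⁻¹)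
    (V : Type*) [AddCommGroup V] [Module F V]
    (θ : V → V → F)
    (hadd₁ : ∀ a a' b, θ (a + a') b = θ a b + θ a' b)
    (hadd₂ : ∀ a b b', θ a (b + b') = θ a b + θ a b')
    (hsmul₁ : ∀ (c : F) a b, θ (c • a) b = J c * θ a b)
    (hsmul₂ : ∀ (c : F) a b, θ a (c • b) = θ a b * c)
    -- θ is (-ε)-symmetric
    (hsym : ∀ a b, θ a b = (-ε) * J (θ b a))
    -- θ is nonsingular
    (hnd₁ : ∀ v : V, v ≠ 0 → ∃ w, θ v w ≠ 0)
    -- f is an isometry with 1 - f invertible, with inverse g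
    (f : V →ₗ[F] V)
    (hisom : ∀ a b, θ (f a) (f b) = θ a b)
    (g : V →ₗ[F] V) (hg : ∀ v, g v - f (g v) = v)
    -- the induced form over F(t)
    (Θ : V → V → RatFunc F)
    (hΘ : ∀ v w, Θ v w =
      (1 - (RatFunc.X)⁻¹) * RatFunc.C (θ (g v) w)
        + RatFunc.C ε * ((1 - RatFunc.X) * RatFunc.C (J (θ (g w) v)))) :
    -- Θ is ε-hermitian and nonsingular over F(t)
    (∀ v w, Θ v w = RatFunc.C ε * JR (Θ w v)) ∧
    (∀ (n : ℕ) (b : Module.Basis (Fin n) F V),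
      (Matrix.of fun i j => Θ (b i) (b j)).det ≠ 0) := by
  have hJε : J ε = ε := by rcases hε with rfl | rfl <;> simp
  have hε2 : ε * ε = 1 := by rcases hε with rfl | rfl <;> norm_num
  refine ⟨fun v w => by rw [hΘ, hΘ]; exact RatFunc.eq_C_mul_conj_swap hJ hJRC hJRX hJε hε2 _ _,
    fun n b => ?_⟩
  let B : V →ₛₗ[J] V →ₗ[F] F := LinearMap.mk₂'ₛₗ J (RingHom.id F) θ hadd₁ hsmul₁ hadd₂
    fun c a b => (hsmul₂ c a b).trans (mul_comm _ _)
  have hsplit (v w : V) : θ (g v) w + θ v (g w) = θ v w := by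
    simpa [B, hg, add_comm] using (B.apply_sub_apply_sub_of_isometry f hisom (g v) (g w)).symm
  have hΘ_factor (v w : V) : Θ v w = (1 - RatFunc.X⁻¹) *
      (RatFunc.C (θ (g v) w) + RatFunc.X * RatFunc.C (θ v (g w))) := by
    refine (hΘ v w).trans (RatFunc.add_C_mul_eq_one_sub_inv_X_mul ?_)
    rw [hsym v (g w)]
    ring
  have hgram : (Matrix.of fun i j => Θ (b i) (b j)) = (1 - RatFunc.X⁻¹ : RatFunc F) •
      Matrix.of fun i j =>
        RatFunc.C (θ (g (b i)) (b j)) + RatFunc.X * RatFunc.C (θ (b i) (g (b j))) := by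
    ext
    simp [hΘ_factor]
  have hB : B.SeparatingLeft := fun v hv => by
    by_contra h
    obtain ⟨w, hw⟩ := hnd₁ v h
    exact hw (hv w)
  rw [hgram, Matrix.det_smul]
  refine mul_ne_zero (pow_ne_zero _ RatFunc.one_sub_inv_X_ne_zero)
    (RatFunc.det_C_add_X_mul_C_ne_zero ?_)
  convert hB.det_of_apply_basis_ne_zero hJ b using 3
  ext
  exact hsplit _ _

/-- Let `f` be an isometry of a nonsingular `(-ε)`-symmetric form `(V, θ)` over
a field `F` with involution `J`, such that `1 - f` is invertible (with inverse
`g`).  Then the `F(t)`-valued sesquilinear form on `V ⊗_F F(t)` defined on `V`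
by `(v, w) ↦ (1 - t⁻¹)·θ((1 - f)⁻¹v, w) + ε(1 - t)·conj(θ((1 - f)⁻¹w, v))` is a
nonsingular `ε`-hermitian form over `F(t)`, where `F(t)` carries the involution
`JR` extending `J` with `t̄ = t⁻¹`: it satisfies `Θ(v,w) = ε·JR(Θ(w,v))`, and
its Gram matrix with respect to any basis of `V` is invertible. -/
theorem statement12 (F : Type*) [Field F]
    (J : F →+* F) (hJ : ∀ x, J (J x) = x)
    (ε : F) (hε : ε = 1 ∨ ε = -1)
    (JR : RatFunc F →+* RatFunc F)
    (hJRC : ∀ a : F, JR (RatFunc.C a) = RatFunc.C (J a))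
    (hJRX : JR RatFunc.X = (RatFunc.X)⁻¹)
    (V : Type*) [AddCommGroup V] [Module F V] [FiniteDimensional F V]
    (θ : V → V → F)
    (hadd₁ : ∀ a a' b, θ (a + a') b = θ a b + θ a' b)
    (hadd₂ : ∀ a b b', θ a (b + b') = θ a b + θ a b')
    (hsmul₁ : ∀ (c : F) a b, θ (c • a) b = J c * θ a b)
    (hsmul₂ : ∀ (c : F) a b, θ a (c • b) = θ a b * c)
    -- θ is (-ε)-symmetric
    (hsym : ∀ a b, θ a b = (-ε) * J (θ b a))
    -- θ is nonsingular
    (hnd₁ : ∀ v : V, v ≠ 0 → ∃ w, θ v w ≠ 0)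
    (hnd₂ : ∀ w : V, w ≠ 0 → ∃ v, θ v w ≠ 0)
    -- f is an isometry with 1 - f invertible, with inverse g
    (f : V →ₗ[F] V) (hf : Function.Bijective f)
    (hisom : ∀ a b, θ (f a) (f b) = θ a b)
    (hf1 : Function.Bijective ((LinearMap.id : V →ₗ[F] V) - f))
    (g : V →ₗ[F] V) (hg : ∀ v, g v - f (g v) = v) (hg' : ∀ v, g (v - f v) = v)
    -- the induced form over F(t)
    (Θ : V → V → RatFunc F)
    (hΘ : ∀ v w, Θ v w =
      (1 - (RatFunc.X)⁻¹) * RatFunc.C (θ (g v) w)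
        + RatFunc.C ε * ((1 - RatFunc.X) * RatFunc.C (J (θ (g w) v)))) :
    -- Θ is ε-hermitian and nonsingular over F(t)
    (∀ v w, Θ v w = RatFunc.C ε * JR (Θ w v)) ∧
    (∀ (n : ℕ) (b : Module.Basis (Fin n) F V),
      (Matrix.of fun i j => Θ (b i) (b j)).det ≠ 0) :=
  statement12_general F J hJ ε hε JR hJRC hJRX V θ hadd₁ hadd₂ hsmul₁ hsmul₂ hsym hnd₁ f hisom g hg
    Θ hΘ
end
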